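/- arXiv:1004.5479 — 3 statements merged into one kernel-verified Lean document; each statement's English description precedes it below -/
import Mathlib

section
/- Let p0, p1, ..., pK be strictly positive probability densities on ℝ^N, and consider minimizing F(r) = D(p0 ‖ Σ_{k=1}^K r_k p_k) over the probability simplex {r ∈ [0,1]^K : Σ r_k = 1}. Then the vertex r = e_1 (all mass on p_1) is a global minimizer if and only if for every k ≠ 1, ∫ p0 · (p_k / p_1) dx ≤ 1 (equivalently E_{p0}[p_k/p_1] ≤ 1). -/
/-!
Write `q_r = ∑ r_k p_k` and `g = p 0`. Since `log (p0/g) - log (p0/q_r) = log (q_r/g)`, the vertex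
is optimal iff `E_{p0}[log (q_r/g)] ≤ 0` for every `r` in the simplex. By `log x ≤ x - 1` this
follows from `E_{p0}[q_r/g] = ∑ r_k E_{p0}[p_k/g] ≤ 1`. Conversely, on the segment from the
vertex towards `p k` the mixture ratio is `1 + t u` with `u = p k/g - 1`, and
`t⁻¹ log (1 + t u)` increases to `u` as `t ↓ 0`, so monotone convergence turns
`E_{p0}[log (1 + t u)] ≤ 0` into `E_{p0}[u] ≤ 0`.
-/

open MeasureTheory Real Filter Topology Set

theorem antitoneOn_log_one_add_mul_div {u : ℝ} (hu : -1 < u) :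
    AntitoneOn (fun t => log (1 + t * u) / t) (Ioc 0 1) := by
  rintro s ⟨hs, -⟩ t ⟨ht, ht1⟩ hst
  have hsu : 0 < 1 + s * u := by nlinarith
  have htu : 0 < 1 + t * u := by nlinarith
  have hbern : 1 + t * u ≤ (1 + s * u) ^ (t / s) := by
    calc 1 + t * u = 1 + t / s * (s * u) := by field_simp
      _ ≤ _ := one_add_mul_self_le_rpow_one_add (by nlinarith) ((one_le_div hs).2 hst)
  have hlog := log_le_log htu hbern
  rw [log_rpow hsu] at hlog
  dsimp only
  rw [div_le_div_iff₀ ht hs]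
  calc log (1 + t * u) * s ≤ t / s * log (1 + s * u) * s := by gcongr
    _ = log (1 + s * u) * t := by field_simp

theorem sum_mul_pos_of_sum_eq_one {ι : Type*} [Fintype ι] {r a : ι → ℝ} (hr : ∀ i, 0 ≤ r i)
    (hs : ∑ i, r i = 1) (ha : ∀ i, 0 < a i) : 0 < ∑ i, r i * a i := by
  simpa using (convex_Ioi (0 : ℝ)).sum_mem (t := Finset.univ) (fun i _ => hr i) hs
    fun i _ => mem_Ioi.2 (ha i)

theorem mul_log_div_eq_sub {a b c : ℝ} (hb : b ≠ 0) (hc : c ≠ 0) :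
    a * log (c / b) = a * log (a / b) - a * log (a / c) := by
  rcases eq_or_ne a 0 with rfl | ha
  · simp
  · rw [log_div hc hb, log_div ha hb, log_div ha hc]; ring

section Integrals

variable {α : Type*} [MeasurableSpace α] {μ : Measure α}

theorem integral_mul_le_zero_of_integral_mul_log_one_add_le_zero {f u : α → ℝ}
    (hf : ∀ x, 0 ≤ f x) (hu : ∀ x, -1 < u x) (hfu : Integrable (fun x => f x * u x) μ)
    (h : ∀ t ∈ Ioc (0 : ℝ) 1, Integrable (fun x => f x * log (1 + t * u x)) μ ∧
      ∫ x, f x * log (1 + t * u x) ∂μ ≤ 0) :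
    ∫ x, f x * u x ∂μ ≤ 0 := by
  set t : ℕ → ℝ := fun n => ((n : ℝ) + 1)⁻¹
  have ht : ∀ n, t n ∈ Ioc 0 1 := fun n =>
    ⟨by positivity, inv_le_one_of_one_le₀ (by simp)⟩
  have ht_anti : Antitone t := fun m n hmn => by
    simp only [t]; gcongr
  have hmono : ∀ x, Monotone fun n => f x * log (1 + t n * u x) / t n := fun x m n hmn => by
    simp only [mul_div_assoc]
    exact mul_le_mul_of_nonneg_left
      (antitoneOn_log_one_add_mul_div (hu x) (ht n) (ht m) (ht_anti hmn)) (hf x)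
  have hlim : ∀ x, Tendsto (fun n => f x * log (1 + t n * u x) / t n) atTop (𝓝 (f x * u x)) := by
    intro x
    have := (tendsto_mul_log_one_add_div_atTop (u x)).comp
      (tendsto_atTop_add_const_right _ 1 tendsto_natCast_atTop_atTop)
    refine (this.const_mul (f x)).congr fun n => ?_
    simp only [t, Function.comp, div_inv_eq_mul, inv_mul_eq_div]
    ring
  have hconv := integral_tendsto_of_tendsto_of_monotone (fun n => (h _ (ht n)).1.div_const (t n))
    hfu (ae_of_all _ hmono) (ae_of_all _ hlim)
  refine le_of_tendsto' hconv fun n => ?_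
  rw [integral_div]
  exact div_nonpos_of_nonpos_of_nonneg (h _ (ht n)).2 (ht n).1.le

theorem integrable_mul_log_div {f g q : α → ℝ} (hg : ∀ x, g x ≠ 0) (hq : ∀ x, q x ≠ 0)
    (hfg : Integrable (fun x => f x * log (f x / g x)) μ)
    (hfq : Integrable (fun x => f x * log (f x / q x)) μ) :
    Integrable (fun x => f x * log (q x / g x)) μ :=
  (hfg.sub hfq).congr (ae_of_all _ fun x => (mul_log_div_eq_sub (hg x) (hq x)).symm)

theorem integral_mul_log_div_le_iff {f g q : α → ℝ} (hg : ∀ x, g x ≠ 0) (hq : ∀ x, q x ≠ 0)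
    (hfg : Integrable (fun x => f x * log (f x / g x)) μ)
    (hfq : Integrable (fun x => f x * log (f x / q x)) μ) :
    ∫ x, f x * log (f x / g x) ∂μ ≤ ∫ x, f x * log (f x / q x) ∂μ ↔
      ∫ x, f x * log (q x / g x) ∂μ ≤ 0 := by
  simp only [mul_log_div_eq_sub (hg _) (hq _)]
  rw [integral_sub hfg hfq, sub_nonpos]

theorem integral_mul_log_le_integral_mul_sub {f w : α → ℝ} (hf : ∀ x, 0 ≤ f x)
    (hw : ∀ x, 0 < w x) (hflog : Integrable (fun x => f x * log (w x)) μ)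
    (hfw : Integrable (fun x => f x * w x) μ) (hfi : Integrable f μ) :
    ∫ x, f x * log (w x) ∂μ ≤ ∫ x, f x * w x ∂μ - ∫ x, f x ∂μ := by
  rw [← integral_sub hfw hfi]
  refine integral_mono hflog (hfw.sub hfi) fun x => ?_
  have := mul_le_mul_of_nonneg_left (log_le_sub_one_of_pos (hw x)) (hf x)
  linarith

theorem integral_mul_log_sum_mul_div_le_zero {ι : Type*} [Fintype ι] {f g : α → ℝ}
    {p : ι → α → ℝ} {r : ι → ℝ} (hf : ∀ x, 0 ≤ f x) (hg : ∀ x, 0 < g x)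
    (hp : ∀ i x, 0 < p i x) (hr : ∀ i, 0 ≤ r i) (hs : ∑ i, r i = 1) (hfi : Integrable f μ)
    (hfp : ∀ i, Integrable (fun x => f x * (p i x / g x)) μ)
    (hflog : Integrable (fun x => f x * log ((∑ i, r i * p i x) / g x)) μ)
    (hmean : ∀ i, ∫ x, f x * (p i x / g x) ∂μ ≤ ∫ x, f x ∂μ) :
    ∫ x, f x * log ((∑ i, r i * p i x) / g x) ∂μ ≤ 0 := by
  have hsplit : (fun x => f x * ((∑ i, r i * p i x) / g x)) =
      fun x => ∑ i, r i * (f x * (p i x / g x)) := by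
    funext x
    rw [Finset.sum_div, Finset.mul_sum]
    exact Finset.sum_congr rfl fun i _ => by ring
  have hint : ∀ i ∈ Finset.univ, Integrable (fun x => r i * (f x * (p i x / g x))) μ :=
    fun i _ => (hfp i).const_mul (r i)
  have hmix_pos : ∀ x, 0 < (∑ i, r i * p i x) / g x := fun x =>
    div_pos (sum_mul_pos_of_sum_eq_one hr hs (hp · x)) (hg x)
  calc ∫ x, f x * log ((∑ i, r i * p i x) / g x) ∂μ
      ≤ ∫ x, f x * ((∑ i, r i * p i x) / g x) ∂μ - ∫ x, f x ∂μ :=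
        integral_mul_log_le_integral_mul_sub hf hmix_pos hflog
          (hsplit ▸ integrable_finsetSum _ hint) hfi
    _ = ∑ i, r i * ∫ x, f x * (p i x / g x) ∂μ - ∑ i, r i * ∫ x, f x ∂μ := by
        rw [hsplit, integral_finsetSum _ hint, ← Finset.sum_mul, hs, one_mul]
        simp only [integral_const_mul]
    _ ≤ 0 := by
        rw [sub_nonpos]
        exact Finset.sum_le_sum fun i _ => mul_le_mul_of_nonneg_left (hmean i) (hr i)

theorem integral_mul_div_le_of_integral_mul_log_segment_le_zero {f g h : α → ℝ}
    (hf : ∀ x, 0 ≤ f x) (hg : ∀ x, 0 < g x) (hh : ∀ x, 0 < h x) (hfi : Integrable f μ)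
    (hfh : Integrable (fun x => f x * (h x / g x)) μ)
    (hseg : ∀ t ∈ Ioc (0 : ℝ) 1,
      Integrable (fun x => f x * log (((1 - t) * g x + t * h x) / g x)) μ ∧
        ∫ x, f x * log (((1 - t) * g x + t * h x) / g x) ∂μ ≤ 0) :
    ∫ x, f x * (h x / g x) ∂μ ≤ ∫ x, f x ∂μ := by
  have hsegment : ∀ t x, ((1 - t) * g x + t * h x) / g x = 1 + t * (h x / g x - 1) := by
    intro t x
    field_simp [(hg x).ne']
    ring
  simp only [hsegment] at hseg
  have hfu : Integrable (fun x => f x * (h x / g x - 1)) μ :=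
    (hfh.sub hfi).congr (ae_of_all _ fun x => by simp only [Pi.sub_apply]; ring)
  have key := integral_mul_le_zero_of_integral_mul_log_one_add_le_zero hf
    (fun x => by linarith [div_pos (hh x) (hg x)]) hfu hseg
  simp only [mul_sub, mul_one] at key
  rwa [integral_sub hfh hfi, sub_nonpos] at key

end Integrals

theorem stmt_6_general {N K : ℕ} [NeZero K]
    (p0 : (Fin N → ℝ) → ℝ) (p : Fin K → (Fin N → ℝ) → ℝ)
    (hp0pos : ∀ x, 0 < p0 x) (hppos : ∀ k x, 0 < p k x)
    (hp0int : ∫ x, p0 x = 1)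
    (hIntKL : ∀ r : Fin K → ℝ, (∀ k, 0 ≤ r k) → (∑ k, r k = 1) →
      Integrable (fun x => p0 x * Real.log (p0 x / ∑ k, r k * p k x)))
    (hIntRatio : ∀ k, Integrable (fun x => p0 x * (p k x / p 0 x))) :
    ((∀ r : Fin K → ℝ, (∀ k, 0 ≤ r k) → (∑ k, r k = 1) →
        (∫ x, p0 x * Real.log (p0 x / p 0 x)) ≤
          ∫ x, p0 x * Real.log (p0 x / ∑ k, r k * p k x)) ↔
      (∀ k : Fin K, k ≠ 0 → (∫ x, p0 x * (p k x / p 0 x)) ≤ 1)) := by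
  have hp0_int : Integrable p0 := .of_integral_ne_zero (by simp [hp0int])
  have hp0_ne : ∀ x, p 0 x ≠ 0 := fun x => (hppos 0 x).ne'
  have hvertex : Integrable fun x => p0 x * log (p0 x / p 0 x) := by
    obtain ⟨hr, hs⟩ := single_mem_stdSimplex ℝ (0 : Fin K)
    simpa [Pi.single_apply] using hIntKL _ hr hs
  have hreduce : ∀ r ∈ stdSimplex ℝ (Fin K),
      Integrable (fun x => p0 x * log ((∑ k, r k * p k x) / p 0 x)) ∧
      (∫ x, p0 x * log (p0 x / p 0 x) ≤ ∫ x, p0 x * log (p0 x / ∑ k, r k * p k x) ↔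
        ∫ x, p0 x * log ((∑ k, r k * p k x) / p 0 x) ≤ 0) := fun r ⟨hr, hs⟩ =>
    have hq : ∀ x, ∑ k, r k * p k x ≠ 0 := fun x => (sum_mul_pos_of_sum_eq_one hr hs (hppos · x)).ne'
    ⟨integrable_mul_log_div hp0_ne hq hvertex (hIntKL r hr hs),
      integral_mul_log_div_le_iff hp0_ne hq hvertex (hIntKL r hr hs)⟩
  refine ⟨fun hmin k _ => ?_, fun hcond r hr hs => ?_⟩
  · refine hp0int ▸ integral_mul_div_le_of_integral_mul_log_segment_le_zero
      (hp0pos · |>.le) (hppos 0) (hppos k) hp0_int (hIntRatio k) fun t ⟨ht0, ht1⟩ => ?_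
    have hrt := convex_stdSimplex ℝ (Fin K) (single_mem_stdSimplex ℝ 0)
      (single_mem_stdSimplex ℝ k) (sub_nonneg.2 ht1) ht0.le (sub_add_cancel 1 t)
    have hmix : ∀ x, ∑ j, ((1 - t) • Pi.single 0 1 + t • Pi.single k 1 : Fin K → ℝ) j * p j x =
        (1 - t) * p 0 x + t * p k x := fun x => by
      simp [add_mul, Finset.sum_add_distrib, Pi.single_apply]
    simp only [← hmix]
    exact ⟨(hreduce _ hrt).1, (hreduce _ hrt).2.1 (hmin _ hrt.1 hrt.2)⟩
  · refine (hreduce r ⟨hr, hs⟩).2.2 <| integral_mul_log_sum_mul_div_le_zero (hp0pos · |>.le)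
      (hppos 0) hppos hr hs hp0_int hIntRatio (hreduce r ⟨hr, hs⟩).1 fun j => ?_
    rcases eq_or_ne j 0 with rfl | hj
    · simp [div_self (hp0_ne _)]
    · exact hp0int ▸ hcond j hj

/-- The vertex `r = e₁` (all mass on the first density) globally minimizes
`r ↦ D(p0 ‖ Σ_k r_k p_k)` over the probability simplex iff
`E_{p0}[p_k/p_1] ≤ 1` for every `k ≠ 1`. -/
theorem stmt_6 {N K : ℕ} [NeZero K]
    (p0 : (Fin N → ℝ) → ℝ) (p : Fin K → (Fin N → ℝ) → ℝ)
    (hp0meas : Measurable p0) (hpmeas : ∀ k, Measurable (p k))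
    (hp0pos : ∀ x, 0 < p0 x) (hppos : ∀ k x, 0 < p k x)
    (hp0int : ∫ x, p0 x = 1) (hpint : ∀ k, ∫ x, p k x = 1)
    (hIntKL : ∀ r : Fin K → ℝ, (∀ k, 0 ≤ r k) → (∑ k, r k = 1) →
      Integrable (fun x => p0 x * Real.log (p0 x / ∑ k, r k * p k x)))
    (hIntRatio : ∀ k, Integrable (fun x => p0 x * (p k x / p 0 x))) :
    ((∀ r : Fin K → ℝ, (∀ k, 0 ≤ r k) → (∑ k, r k = 1) →
        (∫ x, p0 x * Real.log (p0 x / p 0 x)) ≤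
          ∫ x, p0 x * Real.log (p0 x / ∑ k, r k * p k x)) ↔
      (∀ k : Fin K, k ≠ 0 → (∫ x, p0 x * (p k x / p 0 x)) ≤ 1)) :=
  stmt_6_general p0 p hp0pos hppos hp0int hIntKL hIntRatio
end

section
/- If a dominated PSD φ* exists in an uncertainty set U (satisfying the dominance condition against every φ ∈ U), then it is unique: if φ** ∈ U also satisfies the dominance condition against every element of U, then φ* = φ** almost everywhere on [−π, π]. -/
/-!
Write `r(a, b) = 1 + a (b - a) / (σ² + a)²` for the integrand of the dominance condition of `a`
against `b`. The key identity is
`r(a, b) · r(b, a) = 1 - σ⁴ (a - b)² / ((σ² + a)² (σ² + b)²)`,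
so `log r(a, b) + log r(b, a) ≤ 0`, with equality only when `a = b`. Testing `φ*` against `φ**`
and `φ**` against `φ*` makes the integral of this nonpositive sum nonnegative, hence the sum
vanishes a.e., and so `φ* = φ**` a.e.
-/

open MeasureTheory Real

noncomputable def dominanceRatio (σ2 a b : ℝ) : ℝ :=
  1 + a * (b - a) / (σ2 + a) ^ 2

section DominanceRatio

variable {σ2 a b : ℝ}

lemma dominanceRatio_eq (h : σ2 + a ≠ 0) :
    dominanceRatio σ2 a b = (σ2 ^ 2 + 2 * σ2 * a + a * b) / (σ2 + a) ^ 2 := by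
  unfold dominanceRatio
  field_simp
  ring

lemma dominanceRatio_pos (hσ : 0 < σ2) (ha : 0 ≤ a) (hb : 0 ≤ b) :
    0 < dominanceRatio σ2 a b := by
  rw [dominanceRatio_eq (by positivity)]
  positivity

lemma dominanceRatio_mul_swap (ha : σ2 + a ≠ 0) (hb : σ2 + b ≠ 0) :
    dominanceRatio σ2 a b * dominanceRatio σ2 b a
      = 1 - σ2 ^ 2 * (a - b) ^ 2 / ((σ2 + a) ^ 2 * (σ2 + b) ^ 2) := by
  unfold dominanceRatio
  field_simp
  ring

lemma dominanceRatio_mul_swap_le_one (hσ : 0 < σ2) (ha : 0 ≤ a) (hb : 0 ≤ b) :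
    dominanceRatio σ2 a b * dominanceRatio σ2 b a ≤ 1 := by
  rw [dominanceRatio_mul_swap (by positivity) (by positivity)]
  exact sub_le_self _ (by positivity)

lemma eq_of_dominanceRatio_mul_swap_eq_one (hσ : 0 < σ2) (ha : 0 ≤ a) (hb : 0 ≤ b)
    (h : dominanceRatio σ2 a b * dominanceRatio σ2 b a = 1) : a = b := by
  rw [dominanceRatio_mul_swap (by positivity) (by positivity), sub_eq_self,
    div_eq_zero_iff] at h
  have hden : (σ2 + a) ^ 2 * (σ2 + b) ^ 2 ≠ 0 := by positivity
  simpa [hσ.ne', sub_eq_zero, hden] using h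

lemma log_dominanceRatio_add_swap (hσ : 0 < σ2) (ha : 0 ≤ a) (hb : 0 ≤ b) :
    log (dominanceRatio σ2 a b) + log (dominanceRatio σ2 b a)
      = log (dominanceRatio σ2 a b * dominanceRatio σ2 b a) :=
  (log_mul (dominanceRatio_pos hσ ha hb).ne' (dominanceRatio_pos hσ hb ha).ne').symm

lemma log_dominanceRatio_add_swap_nonpos (hσ : 0 < σ2) (ha : 0 ≤ a) (hb : 0 ≤ b) :
    log (dominanceRatio σ2 a b) + log (dominanceRatio σ2 b a) ≤ 0 := by
  rw [log_dominanceRatio_add_swap hσ ha hb]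
  exact log_nonpos (mul_pos (dominanceRatio_pos hσ ha hb) (dominanceRatio_pos hσ hb ha)).le
    (dominanceRatio_mul_swap_le_one hσ ha hb)

lemma eq_of_log_dominanceRatio_add_swap_eq_zero (hσ : 0 < σ2) (ha : 0 ≤ a) (hb : 0 ≤ b)
    (h : log (dominanceRatio σ2 a b) + log (dominanceRatio σ2 b a) = 0) : a = b := by
  rw [log_dominanceRatio_add_swap hσ ha hb] at h
  exact eq_of_dominanceRatio_mul_swap_eq_one hσ ha hb <| eq_one_of_pos_of_log_eq_zero
    (mul_pos (dominanceRatio_pos hσ ha hb) (dominanceRatio_pos hσ hb ha)) h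

lemma dominanceRatio_mem_Icc {C₁ C₂ : ℝ} (hσ : 0 < σ2) (ha : 0 ≤ a) (hb : 0 ≤ b)
    (haC : a ≤ C₁) (hbC : b ≤ C₂) :
    dominanceRatio σ2 a b ∈ Set.Icc (σ2 ^ 2 / (σ2 + C₁) ^ 2) (1 + C₁ * C₂ / σ2 ^ 2) := by
  constructor
  · rw [dominanceRatio_eq (by positivity)]
    calc σ2 ^ 2 / (σ2 + C₁) ^ 2 ≤ σ2 ^ 2 / (σ2 + a) ^ 2 := by gcongr
      _ ≤ _ := by gcongr; nlinarith [mul_nonneg ha hb]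
  · unfold dominanceRatio
    gcongr 1 + ?_
    calc a * (b - a) / (σ2 + a) ^ 2 ≤ a * b / (σ2 + a) ^ 2 := by gcongr; linarith
      _ ≤ C₁ * C₂ / σ2 ^ 2 := by
        gcongr
        · exact mul_nonneg (ha.trans haC) (hb.trans hbC)
        all_goals linarith

end DominanceRatio

section Integration

variable {α : Type*} [MeasurableSpace α] {μ : Measure α}

lemma integrable_log_dominanceRatio [IsFiniteMeasure μ] {σ2 C₁ C₂ : ℝ} {f g : α → ℝ}
    (hσ : 0 < σ2) (hf : Measurable f) (hg : Measurable g) (hf0 : ∀ x, 0 ≤ f x)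
    (hg0 : ∀ x, 0 ≤ g x) (hfC : ∀ x, f x ≤ C₁) (hgC : ∀ x, g x ≤ C₂) :
    Integrable (fun x ↦ log (dominanceRatio σ2 (f x) (g x))) μ := by
  have hmeas : Measurable fun x ↦ log (dominanceRatio σ2 (f x) (g x)) := by
    unfold dominanceRatio
    fun_prop
  refine .of_bound hmeas.aestronglyMeasurable
    (max |log (σ2 ^ 2 / (σ2 + C₁) ^ 2)| |log (1 + C₁ * C₂ / σ2 ^ 2)|) (ae_of_all _ fun x ↦ ?_)
  have hr := dominanceRatio_mem_Icc hσ (hf0 x) (hg0 x) (hfC x) (hgC x)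
  have hC₁ : 0 ≤ C₁ := (hf0 x).trans (hfC x)
  have hm : 0 < σ2 ^ 2 / (σ2 + C₁) ^ 2 := by positivity
  exact abs_le_max_abs_abs (log_le_log hm hr.1) (log_le_log (hm.trans_le hr.1) hr.2)

lemma ae_eq_zero_of_nonpos_of_integral_nonneg {f : α → ℝ} (hf : f ≤ᵐ[μ] 0)
    (hfi : Integrable f μ) (h : 0 ≤ ∫ x, f x ∂μ) : f =ᵐ[μ] 0 := by
  have hneg : 0 ≤ᵐ[μ] -f := by filter_upwards [hf] with x hx using neg_nonneg.mpr hx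
  have hzero : ∫ x, (-f) x ∂μ = 0 :=
    le_antisymm (by simpa [integral_neg] using h) (integral_nonneg_of_ae hneg)
  filter_upwards [(integral_eq_zero_iff_of_nonneg_ae hneg hfi.neg).mp hzero] with x hx
  exact neg_eq_zero.mp hx

end Integration

/-- Uniqueness of the dominated PSD in an uncertainty set: if `φ*` and `φ**` both
satisfy the dominance condition against every element of `U`, they agree a.e. -/
theorem stmt_14 (σ2 : ℝ) (hσ : 0 < σ2)
    (U : Set (ℝ → ℝ))
    (hmeas : ∀ φ ∈ U, Measurable φ)
    (hnn : ∀ φ ∈ U, ∀ ω, 0 ≤ φ ω)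
    (hbd : ∀ φ ∈ U, ∃ C : ℝ, ∀ ω, φ ω ≤ C)
    (φstar : ℝ → ℝ) (hφstar : φstar ∈ U)
    (hdom : ∀ φ ∈ U, 0 ≤ (1 / (2 * π)) * ∫ ω in Set.Icc (-π) π,
        Real.log (1 + φstar ω * (φ ω - φstar ω) / (σ2 + φstar ω) ^ 2))
    (φstar2 : ℝ → ℝ) (hφstar2 : φstar2 ∈ U)
    (hdom2 : ∀ φ ∈ U, 0 ≤ (1 / (2 * π)) * ∫ ω in Set.Icc (-π) π,
        Real.log (1 + φstar2 ω * (φ ω - φstar2 ω) / (σ2 + φstar2 ω) ^ 2)) :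
    φstar =ᵐ[volume.restrict (Set.Icc (-π) π)] φstar2 := by
  set μ := volume.restrict (Set.Icc (-π) π)
  have ha := hnn φstar hφstar
  have hb := hnn φstar2 hφstar2
  obtain ⟨C₁, hC₁⟩ := hbd φstar hφstar
  obtain ⟨C₂, hC₂⟩ := hbd φstar2 hφstar2
  have hab : Integrable (fun ω ↦ log (dominanceRatio σ2 (φstar ω) (φstar2 ω))) μ :=
    integrable_log_dominanceRatio hσ (hmeas _ hφstar) (hmeas _ hφstar2) ha hb hC₁ hC₂
  have hba : Integrable (fun ω ↦ log (dominanceRatio σ2 (φstar2 ω) (φstar ω))) μ :=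
    integrable_log_dominanceRatio hσ (hmeas _ hφstar2) (hmeas _ hφstar) hb ha hC₂ hC₁
  have hIab : 0 ≤ ∫ ω, log (dominanceRatio σ2 (φstar ω) (φstar2 ω)) ∂μ :=
    nonneg_of_mul_nonneg_right (hdom _ hφstar2) (by positivity)
  have hIba : 0 ≤ ∫ ω, log (dominanceRatio σ2 (φstar2 ω) (φstar ω)) ∂μ :=
    nonneg_of_mul_nonneg_right (hdom2 _ hφstar) (by positivity)
  have hsum := ae_eq_zero_of_nonpos_of_integral_nonneg
    (ae_of_all _ fun ω ↦ log_dominanceRatio_add_swap_nonpos hσ (ha ω) (hb ω)) (hab.add hba)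
    (by rw [integral_add hab hba]; positivity)
  filter_upwards [hsum] with ω hω
  exact eq_of_log_dominanceRatio_add_swap_eq_zero hσ (ha ω) (hb ω) hω
end

section
/- Let A and B be positive definite N×N real matrices such that I + σ²(B⁻¹ − A⁻¹) is positive definite and det(B⁻¹A) ≤ det(I + σ²(B⁻¹ − A⁻¹)). Then for Y ~ N(0, σ²I), E[ p_B(Y)/p_A(Y) ] ≤ 1, where p_A and p_B denote the zero-mean Gaussian densities with covariances A and B respectively. -/
/-!
The integrand is a constant multiple of the unnormalised Gaussian `exp (-½ yᵀ M y)` with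
`M = B⁻¹ - A⁻¹ + (σ²I)⁻¹ = σ⁻² (I + σ² (B⁻¹ - A⁻¹))`, which is positive definite. Its integral
`(2π)^(N/2) det(M)^(-1/2)` (substitute `x = √M y`) collapses the constants, since
`det(σ²I) det M = det(I + σ² (B⁻¹ - A⁻¹))`, to `(det(B⁻¹A) / det(I + σ²(B⁻¹ - A⁻¹)))^(1/2)`,
which is at most `1` by the determinant hypothesis.
-/

open MeasureTheory Matrix

noncomputable def gaussDensity {N : ℕ} (S : Matrix (Fin N) (Fin N) ℝ)
    (y : Fin N → ℝ) : ℝ :=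
  (2 * Real.pi) ^ (-(N : ℝ) / 2) * S.det ^ (-(1 : ℝ) / 2) *
    Real.exp (-(1 / 2) * (y ⬝ᵥ S⁻¹.mulVec y))

theorem integral_exp_neg_half_dotProduct_self (ι : Type*) [Fintype ι] :
    ∫ x : ι → ℝ, Real.exp (-(1 / 2) * (x ⬝ᵥ x)) = (2 * Real.pi) ^ ((Fintype.card ι : ℝ) / 2) := by
  have hprod (x : ι → ℝ) : Real.exp (-(1 / 2) * (x ⬝ᵥ x)) = ∏ i, Real.exp (-(1 / 2) * x i ^ 2) := by
    rw [← Real.exp_sum, dotProduct, Finset.mul_sum]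
    simp only [sq]
  have h1 : ∫ t : ℝ, Real.exp (-(1 / 2) * t ^ 2) = √(2 * Real.pi) := by
    rw [integral_gaussian]; congr 1; field_simp
  simp_rw [hprod]
  rw [volume_pi, integral_fintype_prod_eq_pow (fun t : ℝ => Real.exp (-(1 / 2) * t ^ 2)), h1,
    Real.sqrt_eq_rpow, ← Real.rpow_mul_natCast (by positivity)]
  ring_nf

open scoped MatrixOrder in
theorem Matrix.PosDef.integral_exp_neg_half_dotProduct_mulVec {ι : Type*} [Fintype ι]
    [DecidableEq ι] {M : Matrix ι ι ℝ} (hM : M.PosDef) :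
    ∫ y : ι → ℝ, Real.exp (-(1 / 2) * (y ⬝ᵥ M *ᵥ y)) =
      (2 * Real.pi) ^ ((Fintype.card ι : ℝ) / 2) * M.det ^ (-(1 / 2) : ℝ) := by
  set R := CFC.sqrt M
  have hRR : R * R = M := CFC.sqrt_mul_sqrt_self M hM.posSemidef.nonneg
  have hRt : Rᵀ = R := by
    simpa using (CFC.sqrt_nonneg M).posSemidef.isHermitian.eq
  have hdetR : R.det ^ 2 = M.det := by rw [sq, ← det_mul, hRR]
  have hR0 : R.det ≠ 0 := fun h => hM.det_pos.ne' (by rw [← hdetR, h]; ring)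
  have hquad (y : ι → ℝ) : y ⬝ᵥ M *ᵥ y = R *ᵥ y ⬝ᵥ R *ᵥ y := by
    rw [← hRR, ← mulVec_mulVec, dotProduct_mulVec, ← mulVec_transpose, hRt]
  have hcont : Continuous fun x : ι → ℝ => Real.exp (-(1 / 2) * (x ⬝ᵥ x)) := by
    simp only [dotProduct]; fun_prop
  have hcv : ∫ y : ι → ℝ, Real.exp (-(1 / 2) * (y ⬝ᵥ M *ᵥ y)) =
      |R.det⁻¹| * ∫ x : ι → ℝ, Real.exp (-(1 / 2) * (x ⬝ᵥ x)) := by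
    simp_rw [hquad, ← toLin'_apply]
    rw [← integral_map (toLin' R).continuous_of_finiteDimensional.aemeasurable
      hcont.aestronglyMeasurable, Real.map_matrix_volume_pi_eq_smul_volume_pi hR0,
      integral_smul_measure, ENNReal.toReal_ofReal (abs_nonneg _), smul_eq_mul]
  rw [hcv, integral_exp_neg_half_dotProduct_self, abs_inv, ← Real.sqrt_sq_eq_abs, hdetR,
    Real.sqrt_eq_rpow, ← Real.rpow_neg hM.det_pos.le, mul_comm]

theorem gaussDensity_div_mul_gaussDensity {N : ℕ} {A : Matrix (Fin N) (Fin N) ℝ}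
    (hA : 0 < A.det) (B S : Matrix (Fin N) (Fin N) ℝ) (y : Fin N → ℝ) :
    gaussDensity B y / gaussDensity A y * gaussDensity S y =
      B.det ^ (-(1 : ℝ) / 2) / A.det ^ (-(1 : ℝ) / 2) * S.det ^ (-(1 : ℝ) / 2) *
        (2 * Real.pi) ^ (-(N : ℝ) / 2) *
          Real.exp (-(1 / 2) * (y ⬝ᵥ (B⁻¹ - A⁻¹ + S⁻¹) *ᵥ y)) := by
  have hexp : Real.exp (-(1 / 2) * (y ⬝ᵥ (B⁻¹ - A⁻¹ + S⁻¹) *ᵥ y)) =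
      Real.exp (-(1 / 2) * (y ⬝ᵥ B⁻¹ *ᵥ y)) / Real.exp (-(1 / 2) * (y ⬝ᵥ A⁻¹ *ᵥ y)) *
        Real.exp (-(1 / 2) * (y ⬝ᵥ S⁻¹ *ᵥ y)) := by
    rw [← Real.exp_sub, ← Real.exp_add, add_mulVec, sub_mulVec, dotProduct_add, dotProduct_sub]
    ring_nf
  have hc : 0 < (2 * Real.pi) ^ (-(N : ℝ) / 2) := by positivity
  have hdA : 0 < A.det ^ (-(1 : ℝ) / 2) := Real.rpow_pos_of_pos hA _
  rw [hexp, gaussDensity, gaussDensity, gaussDensity]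
  field_simp

theorem integral_gaussDensity_div_mul_gaussDensity {N : ℕ} {A B S : Matrix (Fin N) (Fin N) ℝ}
    (hA : 0 < A.det) (hB : 0 < B.det) (hS : 0 < S.det) (hM : (B⁻¹ - A⁻¹ + S⁻¹).PosDef) :
    ∫ y, gaussDensity B y / gaussDensity A y * gaussDensity S y =
      (A.det / (B.det * S.det * (B⁻¹ - A⁻¹ + S⁻¹).det)) ^ (1 / 2 : ℝ) := by
  simp_rw [gaussDensity_div_mul_gaussDensity hA]
  rw [integral_const_mul, hM.integral_exp_neg_half_dotProduct_mulVec, Fintype.card_fin]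
  have hc : (2 * Real.pi) ^ (-((N : ℝ) / 2)) * (2 * Real.pi) ^ ((N : ℝ) / 2) = 1 := by
    rw [← Real.rpow_add (by positivity), neg_add_cancel, Real.rpow_zero]
  have hM0 := hM.det_pos
  simp only [neg_div, Real.rpow_neg hA.le, Real.rpow_neg hB.le, Real.rpow_neg hS.le,
    Real.rpow_neg hM0.le]
  rw [Real.div_rpow hA.le (by positivity), Real.mul_rpow (by positivity) hM0.le,
    Real.mul_rpow hB.le hS.le]
  field_simp
  linear_combination hc

/-- 'If' direction of the Gaussian dominance characterization:
positive definiteness of `I + σ²(B⁻¹ − A⁻¹)` together with the determinant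
inequality implies `E_{N(0,σ²I)}[p_B/p_A] ≤ 1`. -/
theorem stmt_15 {N : ℕ} (σ2 : ℝ) (hσ : 0 < σ2)
    (A B : Matrix (Fin N) (Fin N) ℝ) (hA : A.PosDef) (hB : B.PosDef)
    (hpd : (1 + σ2 • (B⁻¹ - A⁻¹)).PosDef)
    (hdet : (B⁻¹ * A).det ≤ (1 + σ2 • (B⁻¹ - A⁻¹)).det) :
    (∫ y : Fin N → ℝ,
        gaussDensity B y / gaussDensity A y *
          gaussDensity (σ2 • (1 : Matrix (Fin N) (Fin N) ℝ)) y) ≤ 1 := by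
  set S := σ2 • (1 : Matrix (Fin N) (Fin N) ℝ)
  set M := B⁻¹ - A⁻¹ + S⁻¹
  have hS : 0 < S.det := by simp [S, hσ]
  have hSM : S * M = 1 + σ2 • (B⁻¹ - A⁻¹) := by
    rw [mul_add, mul_nonsing_inv _ hS.ne'.isUnit, smul_mul, one_mul, add_comm]
  have hM : M = σ2⁻¹ • (1 + σ2 • (B⁻¹ - A⁻¹)) := by
    rw [← hSM, smul_mul, one_mul, smul_smul, inv_mul_cancel₀ hσ.ne', one_smul]
  have hdetB : (B⁻¹ * A).det = A.det / B.det := by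
    rw [det_mul, det_nonsing_inv, Ring.inverse_eq_inv', inv_mul_eq_div]
  have hMpd : M.PosDef := hM ▸ hpd.smul (inv_pos.mpr hσ)
  have hBA : 0 < (B⁻¹ * A).det := hdetB ▸ div_pos hA.det_pos hB.det_pos
  rw [integral_gaussDensity_div_mul_gaussDensity hA.det_pos hB.det_pos hS hMpd, mul_assoc,
    ← det_mul, hSM, ← div_div, ← hdetB]
  exact Real.rpow_le_one (div_pos hBA hpd.det_pos).le ((div_le_one hpd.det_pos).mpr hdet)
    (by norm_num)
end
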